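/- arXiv:2302.10685 — 2 statements merged into one kernel-verified Lean document; each statement's English description precedes it below -/
import Mathlib

section
/- Let θ > 0, T a positive integer, and an IF neuron as above with total input S = ∑_{t=1}^T I(t) satisfying -θ/2 ≤ S < θT + θ/2. Define the offset spike ψ = aT/θ - ∑_{t=1}^T s(t) where a = (θ/T)·⌊S/θ + 1/2⌋. Then ψ = v(T)/θ + ⌊S/θ + 1/2⌋ - (S/θ + 1/2), and consequently ψ ∈ (v(T)/θ - 1, v(T)/θ + 1). -/
open Finset

/-- Residual membrane potential of an IF neuron with soft reset:
`v 0 = v0`, `v t = v (t-1) + I t - s t * θ` where `s t = 1` iff `v (t-1) + I t ≥ θ`. -/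
noncomputable def ifV (θ v0 : ℝ) (I : ℕ → ℝ) : ℕ → ℝ
  | 0 => v0
  | t + 1 => ifV θ v0 I t + I (t + 1) -
      (if θ ≤ ifV θ v0 I t + I (t + 1) then θ else 0)

/-- Binary spike (as a real number) of the IF neuron at time-step `t ≥ 1`. -/
noncomputable def ifS (θ v0 : ℝ) (I : ℕ → ℝ) (t : ℕ) : ℝ :=
  if θ ≤ ifV θ v0 I (t - 1) + I t then 1 else 0

lemma ifV_telescope (θ v0 : ℝ) (I : ℕ → ℝ) (T : ℕ) :
    ifV θ v0 I T = v0 + ∑ t ∈ Finset.Icc 1 T, I t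
      - θ * ∑ t ∈ Finset.Icc 1 T, ifS θ v0 I t := by
  induction T with
  | zero => simp [ifV]
  | succ n ih =>
    rw [show Finset.Icc 1 (n+1) = insert (n+1) (Finset.Icc 1 n) by
      ext x; simp [Nat.lt_succ_iff, Nat.le_succ_iff]; omega]
    rw [Finset.sum_insert (by simp), Finset.sum_insert (by simp)]
    simp only [ifV, ifS, Nat.add_sub_cancel, ih]
    split <;> ring

theorem stmt3 (θ : ℝ) (hθ : 0 < θ) (T : ℕ) (hT : 0 < T) (I : ℕ → ℝ)
    (S a ψ : ℝ)
    (hS : S = ∑ t ∈ Finset.Icc 1 T, I t)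
    (hS1 : -θ / 2 ≤ S) (hS2 : S < θ * T + θ / 2)
    (ha : a = (θ / T) * (⌊S / θ + 1 / 2⌋ : ℝ))
    (hψ : ψ = a * T / θ - ∑ t ∈ Finset.Icc 1 T, ifS θ (θ / 2) I t) :
    ψ = ifV θ (θ / 2) I T / θ + (⌊S / θ + 1 / 2⌋ : ℝ) - (S / θ + 1 / 2) ∧
      ifV θ (θ / 2) I T / θ - 1 < ψ ∧ ψ < ifV θ (θ / 2) I T / θ + 1 := by
  have hTne : (T : ℝ) ≠ 0 := Nat.cast_ne_zero.mpr hT.ne'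
  have hθne : θ ≠ 0 := hθ.ne'
  have htel := ifV_telescope θ (θ/2) I T
  have hsum : ∑ t ∈ Finset.Icc 1 T, ifS θ (θ/2) I t
      = (θ/2 + S - ifV θ (θ/2) I T) / θ := by
    rw [hS]; field_simp at htel ⊢; linarith
  have haT : a * T / θ = (⌊S / θ + 1 / 2⌋ : ℝ) := by
    rw [ha]; field_simp
  have key : ψ = ifV θ (θ / 2) I T / θ + (⌊S / θ + 1 / 2⌋ : ℝ) - (S / θ + 1 / 2) := by
    rw [hψ, haT, hsum]; field_simp; ring
  refine ⟨key, ?_, ?_⟩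
  · have := Int.sub_one_lt_floor (S / θ + 1 / 2)
    rw [key]; linarith
  · have := Int.floor_le (S / θ + 1 / 2)
    rw [key]; linarith
end

section
/- Let θ > 0, T a positive integer, I : {1,...,T} → ℝ, and let two IF neurons share the same inputs I(t) and threshold θ but have initial potentials v(0) and ṽ(0) with ṽ(0) < v(0). Let s(t), s̃(t) be their respective spike trains. Then for every t ∈ {1,...,T}, ∑_{k=1}^t s(k) ≥ ∑_{k=1}^t s̃(k). -/
open Finset

lemma ifV_eq (θ v0 : ℝ) (I : ℕ → ℝ) :
    ∀ t, ifV θ v0 I t = v0 + ∑ k ∈ Finset.Icc 1 t, I k - θ * ∑ k ∈ Finset.Icc 1 t, ifS θ v0 I k := by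
  intro t
  induction t with
  | zero => simp [ifV]
  | succ t ih =>
    have h1 : (1:ℕ) ≤ t + 1 := Nat.le_add_left 1 t
    rw [Finset.sum_Icc_succ_top h1, Finset.sum_Icc_succ_top h1]
    have hs : ifS θ v0 I (t+1) = if θ ≤ ifV θ v0 I t + I (t + 1) then 1 else 0 := rfl
    rw [show ifV θ v0 I (t+1) = ifV θ v0 I t + I (t + 1) -
      (if θ ≤ ifV θ v0 I t + I (t + 1) then θ else 0) from rfl, hs]
    by_cases hc : θ ≤ ifV θ v0 I t + I (t + 1)
    · rw [if_pos hc, if_pos hc, ih]; ring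
    · rw [if_neg hc, if_neg hc, ih]; ring

lemma diff_nat (θ : ℝ) (hθ : 0 < θ) (I : ℕ → ℝ) (v0 w0 : ℝ) (h : w0 < v0) :
    ∀ t, ∃ n : ℕ, ∑ k ∈ Finset.Icc 1 t, ifS θ v0 I k - ∑ k ∈ Finset.Icc 1 t, ifS θ w0 I k = n := by
  intro t
  induction t with
  | zero => exact ⟨0, by simp⟩
  | succ t ih =>
    obtain ⟨n, hn⟩ := ih
    have h1 : (1:ℕ) ≤ t + 1 := Nat.le_add_left 1 t
    rw [Finset.sum_Icc_succ_top h1, Finset.sum_Icc_succ_top h1]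
    have hsv : ifS θ v0 I (t+1) = if θ ≤ ifV θ v0 I t + I (t + 1) then 1 else 0 := rfl
    have hsw : ifS θ w0 I (t+1) = if θ ≤ ifV θ w0 I t + I (t + 1) then 1 else 0 := rfl
    by_cases hw : θ ≤ ifV θ w0 I t + I (t + 1)
    · by_cases hv : θ ≤ ifV θ v0 I t + I (t + 1)
      · exact ⟨n, by rw [hsv, hsw, if_pos hv, if_pos hw]; linarith⟩
      · -- v does not spike but w does: n ≥ 1
        rcases n with _ | m
        · exfalso
          have hvw : ifV θ v0 I t - ifV θ w0 I t = (v0 - w0) - θ * 0 := by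
            rw [ifV_eq, ifV_eq]
            push_cast at hn
            nlinarith [hn]
          push_neg at hv
          nlinarith
        · refine ⟨m, ?_⟩
          rw [hsv, hsw, if_neg hv, if_pos hw]
          push_cast at hn ⊢
          linarith
    · by_cases hv : θ ≤ ifV θ v0 I t + I (t + 1)
      · refine ⟨n + 1, ?_⟩
        rw [hsv, hsw, if_pos hv, if_neg hw]
        push_cast; linarith
      · exact ⟨n, by rw [hsv, hsw, if_neg hv, if_neg hw]; linarith⟩

theorem stmt5 (θ : ℝ) (hθ : 0 < θ) (T : ℕ) (hT : 0 < T) (I : ℕ → ℝ)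
    (v0 w0 : ℝ) (h : w0 < v0) :
    ∀ t ∈ Finset.Icc 1 T,
      ∑ k ∈ Finset.Icc 1 t, ifS θ w0 I k ≤ ∑ k ∈ Finset.Icc 1 t, ifS θ v0 I k := by
  intro t _
  obtain ⟨n, hn⟩ := diff_nat θ hθ I v0 w0 h t
  have : (0:ℝ) ≤ n := Nat.cast_nonneg n
  linarith
end
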